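/- (Touchard's congruence) For every prime p and positive integer n, B_{n+p} \equiv B_n + B_{n+1} (mod p). -/

import Mathlib

/-!
Let `Tₙ = ∑ₖ S(n, k) Xᵏ` be the Touchard polynomials, so that `Tₙ(1) = Bₙ` and the Stirling
recurrence reads `Tₙ₊₁ = X (Tₙ + Tₙ')`. Over `𝔽_p` the derivative of `X ^ p` vanishes, so the
operator `X (1 + d/dX)` commutes with multiplication by `X ^ p`, and `Tₙ₊ₚ = Tₙ₊₁ + X ^ p Tₙ`
follows by induction on `n` from `Tₚ = X + X ^ p`. The latter comes from
`k! S(n, k) = Δᵏ(xⁿ)(0)`: since `x ^ p = x` on `𝔽_p`, `k! S(p, k) ≡ k! S(1, k)`, and `k!` is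
invertible for `k < p`. Evaluating at `1` gives the congruence.
-/

/-- Stirling numbers of the second kind. -/
def stirling : ℕ → ℕ → ℕ
  | 0, 0 => 1
  | 0, _ + 1 => 0
  | _ + 1, 0 => 0
  | n + 1, k + 1 => stirling n k + (k + 1) * stirling n (k + 1)

/-- The `n`-th Bell number. -/
def bell (n : ℕ) : ℕ := ∑ k ∈ Finset.range (n + 1), stirling n k

open Finset Polynomial
open scoped fwdDiff Nat

theorem stirling_eq_stirlingSecond : ∀ n k : ℕ, stirling n k = Nat.stirlingSecond n k
  | 0, 0 | 0, _ + 1 | _ + 1, 0 => rfl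
  | n + 1, k + 1 => by
    rw [stirling, Nat.stirlingSecond_succ_succ, stirling_eq_stirlingSecond n k,
      stirling_eq_stirlingSecond n (k + 1), add_comm]

section fwdDiff

variable {R : Type*} [CommRing R]

theorem fwdDiff_iter_succ_id_mul (f : R → R) (k : ℕ) (x : R) :
    Δ_[1] ^[k + 1] (fun y ↦ y * f y) x =
      x * Δ_[1] ^[k + 1] f x + (k + 1) * Δ_[1] ^[k] f (x + 1) := by
  induction k generalizing x with
  | zero =>
    simp only [zero_add, Function.iterate_one, Function.iterate_zero, id, fwdDiff, Nat.cast_zero]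
    ring
  | succ k ih =>
    rw [Function.iterate_succ_apply', funext ih]
    simp only [Function.iterate_succ_apply', fwdDiff]
    push_cast
    ring

theorem fwdDiff_iter_pow_apply_zero (n k : ℕ) :
    Δ_[1] ^[k] (fun x : R ↦ x ^ n) 0 = k ! * Nat.stirlingSecond n k := by
  induction n generalizing k with
  | zero =>
    rcases k.eq_zero_or_pos with rfl | hk
    · simp
    · rw [fwdDiff_iter_pow_eq_zero_of_lt hk, Nat.stirlingSecond_eq_zero_of_lt hk]
      simp
  | succ n ih =>
    cases k with
    | zero => simp
    | succ k =>
      have hshift : Δ_[1] ^[k] (fun x : R ↦ x ^ n) 1 =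
          Δ_[1] ^[k] (fun x : R ↦ x ^ n) 0 + Δ_[1] ^[k + 1] (fun x : R ↦ x ^ n) 0 := by
        rw [Function.iterate_succ_apply', fwdDiff, zero_add, add_sub_cancel]
      simp_rw [pow_succ', fwdDiff_iter_succ_id_mul, zero_mul, zero_add, hshift, ih,
        Nat.stirlingSecond_succ_succ, Nat.factorial_succ]
      push_cast
      ring

end fwdDiff

theorem cast_stirlingSecond_prime_of_lt {p k : ℕ} [hp : Fact p.Prime] (hk : k < p) :
    (Nat.stirlingSecond p k : ZMod p) = Nat.stirlingSecond 1 k := by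
  have hfac : (k ! : ZMod p) ≠ 0 := by
    rw [Ne, ZMod.natCast_eq_zero_iff, hp.out.dvd_factorial]
    omega
  refine mul_left_cancel₀ hfac ?_
  simp_rw [← fwdDiff_iter_pow_apply_zero, ZMod.pow_card, pow_one]

section touchardPoly

variable (R : Type*) [CommSemiring R]

noncomputable def touchardPoly (n : ℕ) : R[X] :=
  ∑ k ∈ range (n + 1), C (Nat.stirlingSecond n k : R) * X ^ k

variable {R}

theorem coeff_touchardPoly (n k : ℕ) :
    (touchardPoly R n).coeff k = Nat.stirlingSecond n k := by
  simp only [touchardPoly, finsetSum_coeff, coeff_C_mul_X_pow, sum_ite_eq, mem_range]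
  split_ifs with hk
  · rfl
  · rw [Nat.stirlingSecond_eq_zero_of_lt (by omega), Nat.cast_zero]

theorem touchardPoly_zero : touchardPoly R 0 = 1 := by
  simp [touchardPoly]

theorem touchardPoly_succ (n : ℕ) :
    touchardPoly R (n + 1) = X * (touchardPoly R n + derivative (touchardPoly R n)) := by
  ext (_ | k)
  · simp [coeff_touchardPoly]
  · rw [coeff_X_mul, coeff_add, coeff_derivative, coeff_touchardPoly, coeff_touchardPoly,
      coeff_touchardPoly, Nat.stirlingSecond_succ_succ]
    push_cast
    ring

theorem eval_one_touchardPoly (n : ℕ) : (touchardPoly R n).eval 1 = bell n := by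
  simp [touchardPoly, eval_finsetSum, bell, stirling_eq_stirlingSecond]

variable {p : ℕ} [hp : Fact p.Prime]

theorem touchardPoly_prime : touchardPoly (ZMod p) p = X + X ^ p := by
  ext k
  rw [coeff_touchardPoly, coeff_add, coeff_X, coeff_X_pow]
  rcases lt_trichotomy k p with hk | rfl | hk
  · rw [cast_stirlingSecond_prime_of_lt hk, if_neg hk.ne, add_zero]
    match k with
    | 0 | 1 => simp [Nat.stirlingSecond_self]
    | k + 2 => simp [Nat.stirlingSecond_eq_zero_of_lt (show 1 < k + 2 by omega)]
  · simp [Nat.stirlingSecond_self, hp.out.one_lt.ne]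
  · simp [Nat.stirlingSecond_eq_zero_of_lt hk, hk.ne', (hp.out.one_lt.trans hk).ne]

theorem touchardPoly_add_prime (n : ℕ) :
    touchardPoly (ZMod p) (n + p) =
      touchardPoly (ZMod p) (n + 1) + X ^ p * touchardPoly (ZMod p) n := by
  induction n with
  | zero => simp [touchardPoly_prime, touchardPoly_succ, touchardPoly_zero, add_comm]
  | succ n ih =>
    rw [add_right_comm, touchardPoly_succ, ih, touchardPoly_succ (n + 1), touchardPoly_succ n]
    simp only [derivative_add, derivative_mul, derivative_X_pow, CharP.cast_eq_zero, C_0, zero_mul]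
    ring

end touchardPoly

theorem touchard_general (p n : ℕ) (hp : p.Prime) :
    bell (n + p) ≡ bell n + bell (n + 1) [MOD p] := by
  have := Fact.mk hp
  rw [← ZMod.natCast_eq_natCast_iff]
  have h := congrArg (eval 1) (touchardPoly_add_prime (p := p) n)
  simp only [eval_add, eval_mul, eval_pow, eval_X, one_pow, one_mul, eval_one_touchardPoly] at h
  push_cast
  rw [h, add_comm]

theorem touchard (p n : ℕ) (hp : p.Prime) (hn : 0 < n) :
    bell (n + p) ≡ bell n + bell (n + 1) [MOD p] :=
  touchard_general p n hp
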